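/- Let 𝕂 be ℝ or ℂ, let λ ∈ 𝕂 with 0 < |λ| < 1, and let A_1 = [[1,0],[0,λ]], A_2 = [[0,λ],[λ,0]]. Then the pair 𝒜 = (A_1, A_2) is irreducible with ϱ(𝒜) = 1, 𝒜 has the finiteness property, the unbounded agreements property and the rank one property, the norm ‖(x,y)ᵀ‖ = max{|x|, |λ y|} is a Barabanov norm for 𝒜, but 𝒜 does not satisfy the strong finiteness hypothesis (no word ω ∈ {1,2}^n for any n is a characteristic word for 𝒜). -/

import Mathlib

open Filter Topology

noncomputable section

namespace JSRPaper

variable {𝕂 : Type*} [RCLike 𝕂] {ι : Type*} [Fintype ι] [DecidableEq ι] {r : ℕ}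

/-- The Euclidean operator norm of a matrix, i.e. the operator norm induced by the
Euclidean norm on `𝕂^ι`. -/
noncomputable def eNorm (A : Matrix ι ι 𝕂) : ℝ :=
  ‖Matrix.toEuclideanCLM (𝕜 := 𝕂) A‖

/-- The product `A_{i n} ⋯ A_{i 1}` associated to the word `i : Fin n → Fin r`. -/
noncomputable def wordProd (A : Fin r → Matrix ι ι 𝕂) {n : ℕ} (i : Fin n → Fin r) :
    Matrix ι ι 𝕂 :=
  ((List.ofFn fun k => A (i k)).reverse).prod

/-- The joint spectral radius of the tuple `A`, expressed via the standard
characterisation `ϱ(𝒜) = inf_n max_{|i| = n} ‖A_{i_n} ⋯ A_{i_1}‖^{1/n}`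
(the infimum equals the limit). -/
noncomputable def jsr (A : Fin r → Matrix ι ι 𝕂) : ℝ :=
  ⨅ n : ℕ+, (⨆ i : Fin (n : ℕ) → Fin r, eNorm (wordProd A i)) ^ ((n : ℝ)⁻¹)

/-- The spectral radius of a matrix, via Gelfand's formula
`ρ(A) = inf_k ‖A^k‖^{1/k}` (the infimum equals the limit). -/
noncomputable def specRad (A : Matrix ι ι 𝕂) : ℝ :=
  ⨅ k : ℕ+, eNorm (A ^ (k : ℕ)) ^ (((k : ℕ) : ℝ)⁻¹)

/-- `N` is a norm on `𝕂^ι`. -/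
def IsNorm (N : EuclideanSpace 𝕂 ι → ℝ) : Prop :=
  (∀ v, N v = 0 ↔ v = 0) ∧ (∀ (c : 𝕂) (v), N (c • v) = ‖c‖ * N v) ∧
    ∀ u v, N (u + v) ≤ N u + N v

/-- The operator norm of the matrix `A` induced by the norm `N` on `𝕂^ι`. -/
noncomputable def opNormWrt (N : EuclideanSpace 𝕂 ι → ℝ) (A : Matrix ι ι 𝕂) : ℝ :=
  sSup {x : ℝ | ∃ v, N v ≤ 1 ∧ x = N (Matrix.toEuclideanCLM (𝕜 := 𝕂) A v)}

/-- `N` is a Barabanov norm for the tuple `A` : it is a norm and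
`ϱ(𝒜) ‖v‖ = max_i ‖A_i v‖` for every `v`. -/
def IsBarabanov (A : Fin r → Matrix ι ι 𝕂) (N : EuclideanSpace 𝕂 ι → ℝ) : Prop :=
  IsNorm N ∧ ∀ v, jsr A * N v = ⨆ i : Fin r, N (Matrix.toEuclideanCLM (𝕜 := 𝕂) (A i) v)

/-- The tuple `A` is irreducible: no subspace of `𝕂^ι` other than `⊥` and `⊤`
is invariant under every `A i`. -/
def IsIrreducible (A : Fin r → Matrix ι ι 𝕂) : Prop :=
  ∀ V : Submodule 𝕂 (EuclideanSpace 𝕂 ι),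
    (∀ i, ∀ v ∈ V, Matrix.toEuclideanCLM (𝕜 := 𝕂) (A i) v ∈ V) → V = ⊥ ∨ V = ⊤

/-- Two words of length `n` are rotation equivalent if one is a cyclic shift of the other. -/
def RotEquiv {n : ℕ} (z w : Fin n → Fin r) : Prop :=
  ∃ k : ℕ, ∀ j : Fin n, z j = w ⟨(j.val + k) % n, Nat.mod_lt _ j.pos⟩

/-- The tuple `A` satisfies the strong finiteness hypothesis with characteristic word `ω`:
for every Barabanov norm `N` for `A`, every word of the same length as `ω` which is not
rotation equivalent to `ω` has `N`-operator-norm product strictly less than `ϱ(𝒜)^n`. -/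
def StrongFinHyp (A : Fin r → Matrix ι ι 𝕂) {n : ℕ} (ω : Fin n → Fin r) : Prop :=
  ∀ N : EuclideanSpace 𝕂 ι → ℝ, IsBarabanov A N →
    ∀ z : Fin n → Fin r, ¬ RotEquiv z ω → opNormWrt N (wordProd A z) < jsr A ^ n

/-- The tuple `A` is relatively product bounded : `ϱ(𝒜) > 0` and the set of normalised
products `ϱ(𝒜)^{-n} A_{i_n} ⋯ A_{i_1}` is bounded. -/
def RelProdBounded (A : Fin r → Matrix ι ι 𝕂) : Prop :=
  0 < jsr A ∧ ∃ C : ℝ, ∀ (n : ℕ) (i : Fin n → Fin r), eNorm (wordProd A i) ≤ C * jsr A ^ n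

/-- The limit semigroup `𝒮(𝒜) = ⋂_{m ≥ 1} closure (⋃_{n ≥ m} ϱ(𝒜)^{-n} 𝒜_n)`,
written out via the metric characterisation of the closure. -/
def limitSemigroup (A : Fin r → Matrix ι ι 𝕂) : Set (Matrix ι ι 𝕂) :=
  {B | ∀ m : ℕ, ∀ ε > (0 : ℝ), ∃ n : ℕ, m ≤ n ∧ ∃ i : Fin n → Fin r,
    eNorm ((jsr A ^ n)⁻¹ • wordProd A i - B) < ε}

/-- The tuple `A` has the rank one property: it is relatively product bounded and every
nonzero element of the limit semigroup has rank one. -/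
def RankOneProp (A : Fin r → Matrix ι ι 𝕂) : Prop :=
  RelProdBounded A ∧ ∀ B ∈ limitSemigroup A, B ≠ 0 → B.rank = 1

/-- The product `A_{i n} ⋯ A_{i 1}` along the first `n` terms of the sequence `i`
(indexed from `1`). -/
noncomputable def seqProd (A : Fin r → Matrix ι ι 𝕂) (i : ℕ → Fin r) (n : ℕ) :
    Matrix ι ι 𝕂 :=
  wordProd A fun k : Fin n => i (k.val + 1)

/-- The unbounded agreements property: any two sequences whose normalised partial
products do not tend to zero (i.e. `limsup ‖A_{i(n)} ⋯ A_{i(1)}‖ / ϱ(𝒜)^n > 0`) contain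
arbitrarily long identical blocks. -/
def UnboundedAgreements (A : Fin r → Matrix ι ι 𝕂) : Prop :=
  ∀ N : ℕ, ∀ i₁ i₂ : ℕ → Fin r,
    (∃ c > (0 : ℝ), ∀ m : ℕ, ∃ n, m ≤ n ∧ c ≤ eNorm (seqProd A i₁ n) / jsr A ^ n) →
    (∃ c > (0 : ℝ), ∀ m : ℕ, ∃ n, m ≤ n ∧ c ≤ eNorm (seqProd A i₂ n) / jsr A ^ n) →
    ∃ n₁ n₂ : ℕ, ∀ k : ℕ, 1 ≤ k → k ≤ N → i₁ (n₁ + k) = i₂ (n₂ + k)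

/-- The finiteness property: some periodic product realises the joint spectral radius,
`ρ(A_{i_n} ⋯ A_{i_1})^{1/n} = ϱ(𝒜)`. -/
def FinitenessProp (A : Fin r → Matrix ι ι 𝕂) : Prop :=
  ∃ (n : ℕ) (_ : 0 < n) (i : Fin n → Fin r),
    specRad (wordProd A i) ^ ((n : ℝ)⁻¹) = jsr A

/-- The second exterior power (second compound matrix) of a `d × d` matrix, written
in the standard basis `(e_i ∧ e_j)_{i < j}` of `⋀² 𝕂^d`. -/
noncomputable def ext2 {d : ℕ} (A : Matrix (Fin d) (Fin d) 𝕂) :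
    Matrix {p : Fin d × Fin d // p.1 < p.2} {p : Fin d × Fin d // p.1 < p.2} 𝕂 :=
  fun p q => A p.1.1 q.1.1 * A p.1.2 q.1.2 - A p.1.1 q.1.2 * A p.1.2 q.1.1

/-- The word `ω` of length `n` is a power of a shorter word. -/
def IsPowerOfShorter {n : ℕ} (ω : Fin n → Fin r) : Prop :=
  ∃ (q : ℕ) (h0 : 0 < q) (h1 : q < n), q ∣ n ∧
    ∀ j : Fin n, ω j = ω ⟨j.val % q, lt_trans (Nat.mod_lt _ h0) h1⟩

/-- `Θ_ω(𝒜)`: the supremum of `‖A_{ω_n} ⋯ A_{ω_1}‖^{1/n}` over all Barabanov norms. -/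
noncomputable def Theta {n : ℕ} (ω : Fin n → Fin r) (A : Fin r → Matrix ι ι 𝕂) : ℝ :=
  sSup {x : ℝ | ∃ N, IsBarabanov A N ∧ x = opNormWrt N (wordProd A ω) ^ ((n : ℝ)⁻¹)}

end JSRPaper

/-!
The weighted norm `N(x, y) = max {|x|, |λ y|}` is not increased by `A₁ = diag(1, λ)` nor by
`A₂ = λ · swap`, and for every `v` one of them preserves it: `A₁` keeps `x`, and `A₂` moves `λ y`
into the first coordinate. Since `N` is equivalent to the Euclidean norm, all products are
bounded, while `‖A₁ⁿ‖ = 1`; hence `ϱ(𝒜) = 1` and `N` is a Barabanov norm.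

As `‖A₁‖ = 1` and `‖A₂‖ = |λ| < 1`, a product containing `k` factors `A₂` has norm at most
`|λ|ᵏ`, so a sequence whose products do not tend to zero ends in `A₁ A₁ A₁ ⋯`; this gives
unbounded agreements. Likewise `|det Aᵢ| ≤ |λ|`, so the limit semigroup consists of singular
`2 × 2` matrices, which have rank one unless they vanish.

Finally `A₁ⁿ` (fixing `e₁`) and `A₁ⁿ⁻¹ A₂` (sending `λ⁻¹ e₂` to `e₁`) both have `N`-norm one,
and no word is rotation equivalent to both `1ⁿ` and `2 1ⁿ⁻¹`, so no characteristic word exists.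
-/

open Matrix
open scoped Matrix.Norms.L2Operator

theorem Matrix.rank_pos_of_ne_zero {K : Type*} [Field K] {m n : Type*} [Fintype m] [Fintype n]
    {M : Matrix m n K} (hM : M ≠ 0) : 0 < M.rank := by
  classical
  refine Nat.pos_of_ne_zero fun h => hM ?_
  rw [Matrix.rank, Submodule.finrank_eq_zero, LinearMap.range_eq_bot] at h
  ext i j
  simpa [Matrix.mulVec_single] using congrFun (LinearMap.congr_fun h (Pi.single j 1)) i

theorem Matrix.rank_lt_card_of_det_eq_zero {K : Type*} [Field K] {n : Type*} [Fintype n]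
    [DecidableEq n] {M : Matrix n n K} (h : M.det = 0) : M.rank < Fintype.card n := by
  obtain ⟨v, hv, hMv⟩ := Matrix.exists_mulVec_eq_zero_iff.2 h
  have hker : 0 < Module.finrank K (LinearMap.ker M.mulVecLin) :=
    Module.finrank_pos_iff_exists_ne_zero.2 ⟨⟨v, hMv⟩, fun h => hv (congrArg Subtype.val h)⟩
  have := LinearMap.finrank_range_add_finrank_ker M.mulVecLin
  rw [Module.finrank_fintype_fun_eq_card] at this
  rw [Matrix.rank]
  omega

namespace JSRPaper

section Words

variable {𝕂 : Type*} [RCLike 𝕂] {ι : Type*} [Fintype ι] [DecidableEq ι] {r : ℕ}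
  (A : Fin r → Matrix ι ι 𝕂)

theorem eNorm_eq_norm (M : Matrix ι ι 𝕂) : eNorm M = ‖M‖ := rfl

theorem eNorm_mul_le (M M' : Matrix ι ι 𝕂) : eNorm (M * M') ≤ eNorm M * eNorm M' :=
  norm_mul_le M M'

theorem eNorm_one_le : eNorm (1 : Matrix ι ι 𝕂) ≤ 1 := by
  rw [eNorm, map_one]
  exact ContinuousLinearMap.norm_id_le

@[simp]
theorem wordProd_zero (w : Fin 0 → Fin r) : wordProd A w = 1 := by
  simp [wordProd]

theorem wordProd_succ {n : ℕ} (w : Fin (n + 1) → Fin r) :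
    wordProd A w = A (w (Fin.last n)) * wordProd A (fun k => w k.castSucc) := by
  unfold wordProd
  rw [List.ofFn_succ']
  simp

theorem wordProd_cons {n : ℕ} (a : Fin r) (w : Fin n → Fin r) :
    wordProd A (Fin.cons a w : Fin (n + 1) → Fin r) = wordProd A w * A a := by
  simp [wordProd, List.ofFn_succ]

theorem wordProd_const (a : Fin r) (n : ℕ) : wordProd A (fun _ : Fin n => a) = A a ^ n := by
  induction n with
  | zero => simp
  | succ n ih => rw [wordProd_succ, ih, pow_succ']

theorem seqProd_succ (i : ℕ → Fin r) (n : ℕ) :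
    seqProd A i (n + 1) = A (i (n + 1)) * seqProd A i n :=
  wordProd_succ A _

theorem apply_toEuclideanCLM_wordProd_le {N : EuclideanSpace 𝕂 ι → ℝ}
    (hN : ∀ j v, N (toEuclideanCLM (𝕜 := 𝕂) (A j) v) ≤ N v) {n : ℕ} (w : Fin n → Fin r)
    (v : EuclideanSpace 𝕂 ι) : N (toEuclideanCLM (𝕜 := 𝕂) (wordProd A w) v) ≤ N v := by
  induction n with
  | zero => simp
  | succ n ih =>
    rw [wordProd_succ, map_mul, mul_apply_eq_comp]
    exact (hN _ _).trans (ih _)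

theorem eNorm_wordProd_le {N : EuclideanSpace 𝕂 ι → ℝ} {C : ℝ} (hC : 0 ≤ C)
    (hN : ∀ j v, N (toEuclideanCLM (𝕜 := 𝕂) (A j) v) ≤ N v) (hle : ∀ v, N v ≤ ‖v‖)
    (hge : ∀ v, ‖v‖ ≤ C * N v) {n : ℕ} (w : Fin n → Fin r) : eNorm (wordProd A w) ≤ C :=
  ContinuousLinearMap.opNorm_le_bound _ hC fun v =>
    (hge _).trans <| mul_le_mul_of_nonneg_left
      ((apply_toEuclideanCLM_wordProd_le A hN w v).trans (hle v)) hC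

theorem jsr_eq_one_of_bounds {C : ℝ}
    (hlow : ∀ n, ∃ w : Fin n → Fin r, 1 ≤ eNorm (wordProd A w))
    (hup : ∀ n (w : Fin n → Fin r), eNorm (wordProd A w) ≤ C) : jsr A = 1 := by
  set s : ℕ → ℝ := fun n => ⨆ w : Fin n → Fin r, eNorm (wordProd A w)
  have hs_one : ∀ n, 1 ≤ s n := fun n =>
    let ⟨w, hw⟩ := hlow n
    hw.trans (le_ciSup (f := fun w : Fin n → Fin r => eNorm (wordProd A w))
      (Set.finite_range _).bddAbove w)
  have hs_le : ∀ n, s n ≤ C := fun n =>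
    have : Nonempty (Fin n → Fin r) := ⟨(hlow n).choose⟩
    ciSup_le (hup n)
  have hbdd : BddBelow (Set.range fun n : ℕ+ => s n ^ ((n : ℝ)⁻¹)) :=
    ⟨0, Set.forall_mem_range.2 fun n => Real.rpow_nonneg (zero_le_one.trans (hs_one n)) _⟩
  have hge : 1 ≤ jsr A := le_ciInf fun n => Real.one_le_rpow (hs_one n) (by positivity)
  have hpow : ∀ n : ℕ+, jsr A ^ (n : ℕ) ≤ C := fun n =>
    calc jsr A ^ (n : ℕ) ≤ (s n ^ ((n : ℝ)⁻¹)) ^ (n : ℕ) :=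
          pow_le_pow_left₀ (zero_le_one.trans hge) (ciInf_le hbdd n) _
      _ = s n := by
          rw [← Real.rpow_natCast, ← Real.rpow_mul (zero_le_one.trans (hs_one n)),
            inv_mul_cancel₀ (by positivity), Real.rpow_one]
      _ ≤ C := hs_le n
  refine le_antisymm (not_lt.1 fun hlt => ?_) hge
  obtain ⟨n, hn⟩ := pow_unbounded_of_one_lt C hlt
  exact (hpow ⟨n + 1, n.succ_pos⟩).not_gt (hn.trans_le (pow_le_pow_right₀ hge n.le_succ))

theorem norm_det_wordProd_le {q : ℝ} (hq : 0 ≤ q) (hA : ∀ j, ‖(A j).det‖ ≤ q) {n : ℕ}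
    (w : Fin n → Fin r) : ‖(wordProd A w).det‖ ≤ q ^ n := by
  induction n with
  | zero => simp
  | succ n ih =>
    rw [wordProd_succ, det_mul, norm_mul, pow_succ']
    exact mul_le_mul (hA _) (ih _) (norm_nonneg _) hq

theorem eNorm_seqProd_le {q : ℝ} (a : Fin r) (hA : ∀ j, eNorm (A j) ≤ 1) (ha : eNorm (A a) ≤ q)
    (i : ℕ → Fin r) (n : ℕ) :
    eNorm (seqProd A i n) ≤ q ^ Nat.count (fun k => i (k + 1) = a) n := by
  have hq : 0 ≤ q := (norm_nonneg _).trans ha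
  induction n with
  | zero => simpa [seqProd] using eNorm_one_le
  | succ n ih =>
    rw [seqProd_succ, Nat.count_succ]
    refine (eNorm_mul_le _ _).trans ?_
    split_ifs with h
    · rw [pow_succ', h]
      exact mul_le_mul ha ih (norm_nonneg _) hq
    · simpa using mul_le_mul (hA _) ih (norm_nonneg _) zero_le_one

theorem eventually_ne_of_le_eNorm_seqProd {q c : ℝ} (a : Fin r) (hA : ∀ j, eNorm (A j) ≤ 1)
    (ha : eNorm (A a) ≤ q) (hq : q < 1) (hc : 0 < c) {i : ℕ → Fin r}
    (hi : ∀ m, ∃ n, m ≤ n ∧ c ≤ eNorm (seqProd A i n)) : ∀ᶠ k in atTop, i (k + 1) ≠ a := by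
  by_contra hfreq
  simp only [Filter.not_eventually, ne_eq, not_not] at hfreq
  have hinf := Nat.frequently_atTop_iff_infinite.1 hfreq
  obtain ⟨J, hJ⟩ := exists_pow_lt_of_lt_one hc hq
  obtain ⟨n, hn, hcn⟩ := hi (Nat.nth (fun k => i (k + 1) = a) J)
  have hcount := Nat.count_monotone (fun k => i (k + 1) = a) hn
  rw [Nat.count_nth_of_infinite hinf] at hcount
  have := (eNorm_seqProd_le A a hA ha i n).trans
    (pow_le_pow_of_le_one ((norm_nonneg _).trans ha) hq.le hcount)
  linarith

theorem unboundedAgreements_of_eventually_eq (a : Fin r)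
    (h : ∀ i : ℕ → Fin r,
      (∃ c > (0 : ℝ), ∀ m : ℕ, ∃ n, m ≤ n ∧ c ≤ eNorm (seqProd A i n) / jsr A ^ n) →
        ∀ᶠ k in atTop, i (k + 1) = a) :
    UnboundedAgreements A := by
  intro N i₁ i₂ h₁ h₂
  obtain ⟨M₁, hM₁⟩ := eventually_atTop.1 (h i₁ h₁)
  obtain ⟨M₂, hM₂⟩ := eventually_atTop.1 (h i₂ h₂)
  refine ⟨M₁, M₂, fun k hk _ => ?_⟩
  obtain ⟨k, rfl⟩ := Nat.exists_eq_add_of_le' hk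
  exact (hM₁ (M₁ + k) le_self_add).trans (hM₂ (M₂ + k) le_self_add).symm

theorem det_eq_zero_of_mem_limitSemigroup (hjsr : jsr A = 1) {q : ℝ} (hq₀ : 0 ≤ q) (hq : q < 1)
    (hdet : ∀ n (w : Fin n → Fin r), ‖(wordProd A w).det‖ ≤ q ^ n) {B : Matrix ι ι 𝕂}
    (hB : B ∈ limitSemigroup A) : B.det = 0 := by
  by_contra hB₀
  have hε : 0 < ‖B.det‖ / 2 := by positivity
  obtain ⟨δ, hδ, hcont⟩ :=
    Metric.continuousAt_iff.1
      ((continuous_id.matrix_det : Continuous fun M : Matrix ι ι 𝕂 => M.det).continuousAt (x := B))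
      _ hε
  obtain ⟨m, hm⟩ := exists_pow_lt_of_lt_one hε hq
  obtain ⟨n, hmn, w, hw⟩ := hB m δ hδ
  rw [hjsr, one_pow, inv_one, one_smul] at hw
  have hclose := hcont (by rwa [dist_eq_norm])
  have hsmall := (hdet n w).trans_lt ((pow_le_pow_of_le_one hq₀ hq.le hmn).trans_lt hm)
  rw [dist_eq_norm] at hclose
  dsimp only [id] at hclose
  linarith [norm_sub_norm_le B.det (wordProd A w).det, norm_sub_rev B.det (wordProd A w).det]

theorem le_opNormWrt {N : EuclideanSpace 𝕂 ι → ℝ} {M : Matrix ι ι 𝕂} {C : ℝ}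
    (hM : ∀ v, N v ≤ 1 → N (toEuclideanCLM (𝕜 := 𝕂) M v) ≤ C) {v : EuclideanSpace 𝕂 ι}
    (hv : N v ≤ 1) : N (toEuclideanCLM (𝕜 := 𝕂) M v) ≤ opNormWrt N M :=
  le_csSup ⟨C, by rintro _ ⟨u, hu, rfl⟩; exact hM u hu⟩ ⟨v, hv, rfl⟩

end Words

theorem RotEquiv.eq_of_const {r n : ℕ} {a : Fin r} {ω : Fin n → Fin r}
    (h : RotEquiv (fun _ => a) ω) (j : Fin n) : ω j = a := by
  obtain ⟨k, hk⟩ := h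
  have hn : 0 < n := j.pos
  have hj : ((j + n * k - k) % n + k) % n = j := by
    rw [Nat.mod_add_mod, Nat.sub_add_cancel (le_add_left (Nat.le_mul_of_pos_left k hn)),
      Nat.add_mul_mod_self_left, Nat.mod_eq_of_lt j.isLt]
  simpa [hj] using (hk ⟨(j + n * k - k) % n, Nat.mod_lt _ hn⟩).symm

section DiagSwapPair

variable {𝕂 : Type*} [RCLike 𝕂] {lam : 𝕂}

-- `diagSwapPair lam 0` and `diagSwapPair lam 1` are the paper's `A₁` and `A₂`.
def diagSwapPair (lam : 𝕂) : Fin 2 → Matrix (Fin 2) (Fin 2) 𝕂 :=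
  ![!![1, 0; 0, lam], !![0, lam; lam, 0]]

def weightedMaxNorm (lam : 𝕂) (v : EuclideanSpace 𝕂 (Fin 2)) : ℝ :=
  max ‖v 0‖ (‖lam‖ * ‖v 1‖)

@[simp]
theorem diagSwapPair_zero_apply (v : EuclideanSpace 𝕂 (Fin 2)) :
    toEuclideanCLM (𝕜 := 𝕂) (diagSwapPair lam 0) v = !₂[v 0, lam * v 1] := by
  ext j; fin_cases j <;> simp [diagSwapPair, mulVec, dotProduct, Fin.sum_univ_two]

@[simp]
theorem diagSwapPair_one_apply (v : EuclideanSpace 𝕂 (Fin 2)) :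
    toEuclideanCLM (𝕜 := 𝕂) (diagSwapPair lam 1) v = !₂[lam * v 1, lam * v 0] := by
  ext j; fin_cases j <;> simp [diagSwapPair, mulVec, dotProduct, Fin.sum_univ_two]

theorem diagSwapPair_zero_pow (k : ℕ) : diagSwapPair lam 0 ^ k = diagonal ![1, lam ^ k] := by
  have : diagSwapPair lam 0 = diagonal ![1, lam] := by
    ext i j; fin_cases i <;> fin_cases j <;> simp [diagSwapPair]
  rw [this, diagonal_pow]
  congr 1
  ext i; fin_cases i <;> simp

theorem eNorm_diagSwapPair_zero_pow (h1 : ‖lam‖ ≤ 1) (k : ℕ) :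
    eNorm (diagSwapPair lam 0 ^ k) = 1 := by
  rw [eNorm_eq_norm, diagSwapPair_zero_pow, l2_opNorm_diagonal]
  refine le_antisymm ((pi_norm_le_iff_of_nonneg zero_le_one).2 fun i => ?_) ?_
  · fin_cases i <;> simp [pow_le_one₀ (norm_nonneg lam) h1]
  · simpa using norm_le_pi_norm ![(1 : 𝕂), lam ^ k] 0

theorem eNorm_diagSwapPair_one_le : eNorm (diagSwapPair lam 1) ≤ ‖lam‖ := by
  refine ContinuousLinearMap.opNorm_le_bound _ (norm_nonneg lam) fun v => ?_
  refine (pow_le_pow_iff_left₀ (norm_nonneg _) (by positivity) two_ne_zero).1 ?_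
  simp only [diagSwapPair_one_apply, EuclideanSpace.norm_sq_eq, Fin.sum_univ_two, mul_pow,
    cons_val_zero, cons_val_one, norm_mul]
  exact le_of_eq (by ring)

theorem norm_det_diagSwapPair_le (h1 : ‖lam‖ ≤ 1) (j : Fin 2) :
    ‖(diagSwapPair lam j).det‖ ≤ ‖lam‖ := by
  fin_cases j <;> simp [diagSwapPair, det_fin_two]
  exact mul_le_of_le_one_left (norm_nonneg lam) h1

theorem isNorm_weightedMaxNorm (hlam : lam ≠ 0) : IsNorm (weightedMaxNorm lam) := by
  refine ⟨fun v => ⟨fun h => ?_, fun h => by simp [h, weightedMaxNorm]⟩, fun c v => ?_,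
    fun u v => ?_⟩
  · have h0 : ‖v 0‖ ≤ 0 := h ▸ le_max_left _ _
    have h1 : ‖v 1‖ ≤ 0 := by
      have : ‖lam‖ * ‖v 1‖ ≤ 0 := h ▸ le_max_right _ _
      nlinarith [norm_pos_iff.2 hlam, norm_nonneg (v 1)]
    ext j; fin_cases j
    · simpa using h0
    · simpa using h1
  · simp only [weightedMaxNorm, PiLp.smul_apply, smul_eq_mul, norm_mul, mul_left_comm ‖lam‖]
    exact (mul_max_of_nonneg _ _ (norm_nonneg c)).symm
  · simp only [weightedMaxNorm, PiLp.add_apply]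
    refine max_le ((norm_add_le _ _).trans (add_le_add (le_max_left _ _) (le_max_left _ _))) ?_
    calc ‖lam‖ * ‖u 1 + v 1‖ ≤ ‖lam‖ * ‖u 1‖ + ‖lam‖ * ‖v 1‖ := by
          rw [← mul_add]; exact mul_le_mul_of_nonneg_left (norm_add_le _ _) (norm_nonneg _)
      _ ≤ _ := add_le_add (le_max_right _ _) (le_max_right _ _)

theorem weightedMaxNorm_le_norm (h1 : ‖lam‖ ≤ 1) (v : EuclideanSpace 𝕂 (Fin 2)) :
    weightedMaxNorm lam v ≤ ‖v‖ :=
  max_le (PiLp.norm_apply_le v 0)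
    (mul_le_of_le_one_left (norm_nonneg _) h1 |>.trans (PiLp.norm_apply_le v 1))

theorem norm_le_weightedMaxNorm (hlam : lam ≠ 0) (v : EuclideanSpace 𝕂 (Fin 2)) :
    ‖v‖ ≤ (1 + ‖lam‖⁻¹) * weightedMaxNorm lam v := by
  have hsum : ‖v‖ ≤ ‖v 0‖ + ‖v 1‖ := by
    refine (pow_le_pow_iff_left₀ (norm_nonneg _) (by positivity) two_ne_zero).1 ?_
    rw [EuclideanSpace.norm_sq_eq, Fin.sum_univ_two]
    nlinarith [norm_nonneg (v 0), norm_nonneg (v 1)]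
  have h0 : ‖v 0‖ ≤ weightedMaxNorm lam v := le_max_left _ _
  have h1 : ‖v 1‖ ≤ ‖lam‖⁻¹ * weightedMaxNorm lam v := by
    rw [le_inv_mul_iff₀ (norm_pos_iff.2 hlam)]
    exact le_max_right _ _
  linarith

theorem weightedMaxNorm_apply_le (h1 : ‖lam‖ ≤ 1) (j : Fin 2) (v : EuclideanSpace 𝕂 (Fin 2)) :
    weightedMaxNorm lam (toEuclideanCLM (𝕜 := 𝕂) (diagSwapPair lam j) v) ≤
      weightedMaxNorm lam v := by
  fin_cases j <;> simp only [weightedMaxNorm, Fin.zero_eta, Fin.mk_one, diagSwapPair_zero_apply,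
    diagSwapPair_one_apply] <;> simp only [cons_val_zero, cons_val_one, norm_mul]
  · exact max_le_max le_rfl (mul_le_of_le_one_left (by positivity) h1)
  · exact max_le (le_max_right _ _) <| (mul_le_of_le_one_left (by positivity) h1).trans <|
      (mul_le_of_le_one_left (norm_nonneg _) h1).trans (le_max_left _ _)

theorem iSup_weightedMaxNorm_apply (h1 : ‖lam‖ ≤ 1) (v : EuclideanSpace 𝕂 (Fin 2)) :
    ⨆ j, weightedMaxNorm lam (toEuclideanCLM (𝕜 := 𝕂) (diagSwapPair lam j) v) =
      weightedMaxNorm lam v := by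
  have hbdd := (Set.finite_range fun j =>
    weightedMaxNorm lam (toEuclideanCLM (𝕜 := 𝕂) (diagSwapPair lam j) v)).bddAbove
  refine le_antisymm (ciSup_le fun j => weightedMaxNorm_apply_le h1 j v) (max_le ?_ ?_)
  · refine le_ciSup_of_le hbdd 0 ?_
    simp [weightedMaxNorm]
  · refine le_ciSup_of_le hbdd 1 ?_
    simp [weightedMaxNorm]

theorem jsr_diagSwapPair (hlam : lam ≠ 0) (h1 : ‖lam‖ ≤ 1) : jsr (diagSwapPair lam) = 1 :=
  jsr_eq_one_of_bounds _
    (fun n => ⟨fun _ => 0, by rw [wordProd_const, eNorm_diagSwapPair_zero_pow h1]⟩)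
    (fun _ => eNorm_wordProd_le _ (by positivity) (weightedMaxNorm_apply_le h1)
      (weightedMaxNorm_le_norm h1) (norm_le_weightedMaxNorm hlam))

theorem isBarabanov_weightedMaxNorm (hlam : lam ≠ 0) (h1 : ‖lam‖ ≤ 1) :
    IsBarabanov (diagSwapPair lam) (weightedMaxNorm lam) :=
  ⟨isNorm_weightedMaxNorm hlam, fun v => by
    rw [jsr_diagSwapPair hlam h1, one_mul, iSup_weightedMaxNorm_apply h1]⟩

theorem finitenessProp_diagSwapPair (hlam : lam ≠ 0) (h1 : ‖lam‖ ≤ 1) :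
    FinitenessProp (diagSwapPair lam) := by
  refine ⟨1, one_pos, fun _ => 0, ?_⟩
  simp only [specRad, wordProd_const, pow_one, eNorm_diagSwapPair_zero_pow h1,
    Real.one_rpow, ciInf_const, jsr_diagSwapPair hlam h1]

theorem isIrreducible_diagSwapPair (hlam : lam ≠ 0) (hlam1 : lam ≠ 1) :
    IsIrreducible (diagSwapPair lam) := by
  intro V hV
  refine or_iff_not_imp_left.2 fun hV₀ => ?_
  set e₀ : EuclideanSpace 𝕂 (Fin 2) := !₂[1, 0]
  set e₁ : EuclideanSpace 𝕂 (Fin 2) := !₂[0, 1]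
  have h₀₁ : e₀ ∈ V → e₁ ∈ V := fun h => by
    convert V.smul_mem lam⁻¹ (hV 1 _ h) using 1
    ext j; fin_cases j <;> simp [e₀, e₁, hlam, diagSwapPair]
  have h₁₀ : e₁ ∈ V → e₀ ∈ V := fun h => by
    convert V.smul_mem lam⁻¹ (hV 1 _ h) using 1
    ext j; fin_cases j <;> simp [e₀, e₁, hlam, diagSwapPair]
  have he : e₀ ∈ V ∨ e₁ ∈ V := by
    obtain ⟨v, hv, hv₀⟩ := Submodule.exists_mem_ne_zero_of_ne_bot hV₀
    by_cases hv₁ : v 1 = 0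
    · left
      have hv₀' : v 0 ≠ 0 := fun h => hv₀ (by ext j; fin_cases j <;> simp [h, hv₁])
      convert V.smul_mem (v 0)⁻¹ hv using 1
      ext j; fin_cases j <;> simp [e₀, hv₀', hv₁]
    · right
      convert V.smul_mem ((1 - lam) * v 1)⁻¹ (V.sub_mem hv (hV 0 v hv)) using 1
      ext j; fin_cases j <;> simp [e₁]
      field_simp
  have he₀ : e₀ ∈ V := he.elim id h₁₀
  have he₁ : e₁ ∈ V := h₀₁ he₀
  refine V.eq_top_iff'.2 fun w => ?_
  convert V.add_mem (V.smul_mem (w 0) he₀) (V.smul_mem (w 1) he₁) using 1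
  ext j; fin_cases j <;> simp [e₀, e₁]

theorem unboundedAgreements_diagSwapPair (hlam : lam ≠ 0) (h1 : ‖lam‖ < 1) :
    UnboundedAgreements (diagSwapPair lam) := by
  have hle : ∀ j, eNorm (diagSwapPair lam j) ≤ 1 := by
    refine Fin.forall_fin_two.2 ⟨?_, eNorm_diagSwapPair_one_le.trans h1.le⟩
    simpa using (eNorm_diagSwapPair_zero_pow h1.le 1).le
  refine unboundedAgreements_of_eventually_eq _ 0 fun i ⟨c, hc, hi⟩ => ?_
  simp only [jsr_diagSwapPair hlam h1.le, one_pow, div_one] at hi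
  filter_upwards [eventually_ne_of_le_eNorm_seqProd _ 1 hle eNorm_diagSwapPair_one_le h1 hc hi]
    with k hk
  omega

theorem rankOneProp_diagSwapPair (hlam : lam ≠ 0) (h1 : ‖lam‖ < 1) :
    RankOneProp (diagSwapPair lam) := by
  have hjsr := jsr_diagSwapPair hlam h1.le
  refine ⟨⟨hjsr ▸ one_pos, 1 + ‖lam‖⁻¹, fun n w => ?_⟩, fun B hB hB₀ => ?_⟩
  · rw [hjsr, one_pow, mul_one]
    exact eNorm_wordProd_le _ (by positivity) (weightedMaxNorm_apply_le h1.le)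
      (weightedMaxNorm_le_norm h1.le) (norm_le_weightedMaxNorm hlam) w
  · have hdet := det_eq_zero_of_mem_limitSemigroup _ hjsr (norm_nonneg lam) h1
      (fun _ => norm_det_wordProd_le _ (norm_nonneg lam) (norm_det_diagSwapPair_le h1.le)) hB
    have hpos := Matrix.rank_pos_of_ne_zero hB₀
    have hlt := Matrix.rank_lt_card_of_det_eq_zero hdet
    rw [Fintype.card_fin] at hlt
    omega

theorem one_le_opNormWrt_wordProd (h1 : ‖lam‖ ≤ 1) {n : ℕ} (w : Fin n → Fin 2)
    {v : EuclideanSpace 𝕂 (Fin 2)} (hv : weightedMaxNorm lam v = 1)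
    (hwv : weightedMaxNorm lam (toEuclideanCLM (𝕜 := 𝕂) (wordProd (diagSwapPair lam) w) v) = 1) :
    1 ≤ opNormWrt (weightedMaxNorm lam) (wordProd (diagSwapPair lam) w) :=
  hwv ▸ le_opNormWrt (fun u hu =>
    (apply_toEuclideanCLM_wordProd_le _ (weightedMaxNorm_apply_le h1) w u).trans hu) hv.le

theorem not_strongFinHyp_diagSwapPair (hlam : lam ≠ 0) (h1 : ‖lam‖ < 1) {n : ℕ} (hn : 0 < n)
    (ω : Fin n → Fin 2) : ¬ StrongFinHyp (diagSwapPair lam) ω := by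
  intro hSF
  have hnorm : ∀ z, ¬ RotEquiv z ω →
      opNormWrt (weightedMaxNorm lam) (wordProd (diagSwapPair lam) z) < 1 := fun z hz => by
    simpa [jsr_diagSwapPair hlam h1.le] using
      hSF _ (isBarabanov_weightedMaxNorm hlam h1.le) z hz
  by_cases hω : ∀ j, ω j = 0
  · obtain ⟨m, rfl⟩ := Nat.exists_eq_add_one_of_ne_zero hn.ne'
    refine (hnorm (Fin.cons 1 fun _ => 0) fun ⟨k, hk⟩ => by simpa [hω] using hk 0).not_ge
      (one_le_opNormWrt_wordProd h1.le _ (v := !₂[0, lam⁻¹]) ?_ ?_)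
    · simp [weightedMaxNorm, hlam]
    · rw [wordProd_cons, wordProd_const, diagSwapPair_zero_pow, map_mul, mul_apply_eq_comp,
        diagSwapPair_one_apply]
      simp [weightedMaxNorm, hlam]
  · refine (hnorm (fun _ => 0) fun h => hω h.eq_of_const).not_ge
      (one_le_opNormWrt_wordProd h1.le _ (v := !₂[1, 0]) ?_ ?_)
    · simp [weightedMaxNorm]
    · simp [weightedMaxNorm, wordProd_const, diagSwapPair_zero_pow]

end DiagSwapPair

end JSRPaper

open JSRPaper in
/-- **Example 2.** For `A₁ = [[1,0],[0,λ]]`, `A₂ = [[0,λ],[λ,0]]` with `0 < |λ| < 1`,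
the pair `𝒜 = (A₁, A₂)` is irreducible with `ϱ(𝒜) = 1`, has the finiteness, unbounded
agreements and rank one properties, `‖(x,y)‖ = max {|x|, |λy|}` is a Barabanov norm,
but `𝒜` does not satisfy the strong finiteness hypothesis with any characteristic word. -/
theorem stmt_14 {𝕂 : Type*} [RCLike 𝕂] (lam : 𝕂) (h0 : 0 < ‖lam‖) (h1 : ‖lam‖ < 1)
    (A : Fin 2 → Matrix (Fin 2) (Fin 2) 𝕂)
    (hA : A = ![!![1, 0; 0, lam], !![0, lam; lam, 0]]) :
    IsIrreducible A ∧
    jsr A = 1 ∧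
    FinitenessProp A ∧
    UnboundedAgreements A ∧
    RankOneProp A ∧
    IsBarabanov A (fun v : EuclideanSpace 𝕂 (Fin 2) => max ‖v 0‖ (‖lam‖ * ‖v 1‖)) ∧
    (∀ n : ℕ, 0 < n → ∀ ω : Fin n → Fin 2, ¬ StrongFinHyp A ω) := by
  have hlam : lam ≠ 0 := norm_pos_iff.1 h0
  have hlam1 : lam ≠ 1 := fun h => by simp [h] at h1
  subst hA
  exact ⟨isIrreducible_diagSwapPair hlam hlam1, jsr_diagSwapPair hlam h1.le,
    finitenessProp_diagSwapPair hlam h1.le, unboundedAgreements_diagSwapPair hlam h1,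
    rankOneProp_diagSwapPair hlam h1, isBarabanov_weightedMaxNorm hlam h1.le,
    fun _ hn => not_strongFinHyp_diagSwapPair hlam h1 hn⟩
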